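/- There exist a constant C > 0 and ε₀ ∈ (0,1) such that for every ε ∈ (0, ε₀), the spiral map g_ε : ℝ → ℝ² satisfies: (distortion) for every t₁, t₂ ∈ ℝ, (1 − C/ln²(1/ε))·|t₁ − t₂| ≤ ‖g_ε(t₁) − g_ε(t₂)‖ ≤ (1 + C/ln²(1/ε))·|t₁ − t₂|; and (total movement) for every t ∈ ℝ, ‖g_ε(t) − (t, 0)‖ ≤ C. -/

import Mathlib

/-! Write `g_ε(t) = t · (cos θ(t), sin θ(t))` with a signed radius, where `θ` is `φ_ε` clamped to
`[0, π]`; as a function of `ln |t|` it is `(π / ln(1/ε))`-Lipschitz. Then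
`‖g t₁ - g t₂‖² - (t₁ - t₂)² = 2 t₁ t₂ (1 - cos Δθ)` is at most `|t₁ t₂| Δθ²`, and the
inequality `√(ab) |ln a - ln b| ≤ |a - b|` between the geometric and logarithmic means bounds this
by `(π / ln(1/ε))² (t₁ - t₂)²`. The movement bound follows from `‖g t‖ = |t|` and
`g t = (t, 0)` for `|t| ≥ 1`. -/

/-- The point `(a, b) ∈ ℝ²` (Euclidean plane). -/
noncomputable def pt (a b : ℝ) : EuclideanSpace ℝ (Fin 2) :=
  (WithLp.equiv 2 (Fin 2 → ℝ)).symm ![a, b]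

/-- The angle `φ_ε(t) = π ln(1/|t|) / ln(1/ε)`. -/
noncomputable def spiralPhi (ε t : ℝ) : ℝ :=
  Real.pi * Real.log (1 / |t|) / Real.log (1 / ε)

/-- The spiral map `g_ε : ℝ → ℝ²`. -/
noncomputable def spiral (ε t : ℝ) : EuclideanSpace ℝ (Fin 2) :=
  if 1 ≤ |t| then pt t 0
  else if |t| ≤ ε then pt (-t) 0
  else pt (t * Real.cos (spiralPhi ε t)) (t * Real.sin (spiralPhi ε t))

open Real

lemma mul_mul_log_sub_log_sq_le {a b : ℝ} (ha : 0 ≤ a) (hb : 0 ≤ b) :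
    a * b * (log a - log b) ^ 2 ≤ (a - b) ^ 2 := by
  rcases ha.eq_or_lt with rfl | ha
  · simpa using sq_nonneg b
  rcases hb.eq_or_lt with rfl | hb
  · simpa using sq_nonneg a
  -- Writing `a = e^(m+s)`, `b = e^(m-s)`, the claim becomes `s² ≤ sinh² s`.
  obtain ⟨m, s, rfl, rfl⟩ : ∃ m s, exp (m + s) = a ∧ exp (m - s) = b :=
    ⟨(log a + log b) / 2, (log a - log b) / 2, by ring_nf; exact exp_log ha,
      by ring_nf; exact exp_log hb⟩
  have hsinh : s ^ 2 ≤ sinh s ^ 2 := by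
    rcases le_total 0 s with hs | hs
    · exact pow_le_pow_left₀ hs (self_le_sinh_iff.2 hs) 2
    · nlinarith [sinh_le_self_iff.2 hs]
  have hprod : exp (m + s) * exp (m - s) = exp m ^ 2 := by
    rw [← exp_add, sq, ← exp_add]; ring_nf
  have hdiff : exp (m + s) - exp (m - s) = 2 * exp m * sinh s := by
    rw [exp_add, exp_sub, sinh_eq, exp_neg]; field_simp
  rw [log_exp, log_exp, hprod, hdiff]
  nlinarith [mul_le_mul_of_nonneg_left hsinh (sq_nonneg (exp m))]

lemma le_and_le_of_abs_sq_sub_sq_le {D d δ : ℝ} (hD : 0 ≤ D) (hd : 0 ≤ d) (hδ : 0 ≤ δ)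
    (h : |D ^ 2 - d ^ 2| ≤ δ * d ^ 2) : (1 - δ) * d ≤ D ∧ D ≤ (1 + δ) * d := by
  obtain ⟨hlow, hup⟩ := abs_le.1 h
  constructor
  · rcases le_total δ 1 with hδ1 | hδ1
    · refine (sq_le_sq₀ (by nlinarith) hD).1 ?_
      nlinarith [mul_nonneg hδ (mul_nonneg (sub_nonneg.2 hδ1) (sq_nonneg d))]
    · nlinarith
  · refine (sq_le_sq₀ hD (by positivity)).1 ?_
    nlinarith [mul_nonneg (mul_nonneg hδ hδ) (sq_nonneg d)]

lemma norm_pt (a b : ℝ) : ‖pt a b‖ = √(a ^ 2 + b ^ 2) := by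
  simp [pt, EuclideanSpace.norm_eq, Fin.sum_univ_two]

lemma pt_sub_pt (a b c d : ℝ) : pt a b - pt c d = pt (a - c) (b - d) := by
  ext i; fin_cases i <;> simp [pt]

noncomputable def polar (r θ : ℝ) : EuclideanSpace ℝ (Fin 2) :=
  pt (r * cos θ) (r * sin θ)

lemma norm_polar (r θ : ℝ) : ‖polar r θ‖ = |r| := by
  rw [polar, norm_pt, ← sqrt_sq_eq_abs]
  congr 1
  linear_combination r ^ 2 * cos_sq_add_sin_sq θ

lemma norm_polar_sub_polar_sq (r₁ r₂ θ₁ θ₂ : ℝ) :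
    ‖polar r₁ θ₁ - polar r₂ θ₂‖ ^ 2 = (r₁ - r₂) ^ 2 + 2 * r₁ * r₂ * (1 - cos (θ₁ - θ₂)) := by
  rw [polar, polar, pt_sub_pt, norm_pt, sq_sqrt (by positivity), cos_sub]
  linear_combination r₁ ^ 2 * cos_sq_add_sin_sq θ₁ + r₂ ^ 2 * cos_sq_add_sin_sq θ₂

lemma abs_norm_polar_sub_polar_sq_sub_sq_le {r₁ r₂ θ₁ θ₂ K : ℝ}
    (h : |θ₁ - θ₂| ≤ K * |log (|r₁|) - log (|r₂|)|) :
    |‖polar r₁ θ₁ - polar r₂ θ₂‖ ^ 2 - (r₁ - r₂) ^ 2| ≤ K ^ 2 * (r₁ - r₂) ^ 2 := by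
  set v := θ₁ - θ₂
  have hcos : 0 ≤ 1 - cos v := sub_nonneg.2 (cos_le_one v)
  have hv : v ^ 2 ≤ K ^ 2 * (log |r₁| - log |r₂|) ^ 2 := by
    simpa [mul_pow, sq_abs] using pow_le_pow_left₀ (abs_nonneg v) h 2
  have hlog := mul_mul_log_sub_log_sq_le (abs_nonneg r₁) (abs_nonneg r₂)
  have habs : (|r₁| - |r₂|) ^ 2 ≤ (r₁ - r₂) ^ 2 :=
    sq_le_sq.2 (abs_abs_sub_abs_le_abs_sub r₁ r₂)
  rw [norm_polar_sub_polar_sq, add_sub_cancel_left, abs_mul, abs_mul, abs_mul,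
    abs_two, abs_of_nonneg hcos]
  calc 2 * |r₁| * |r₂| * (1 - cos v)
      ≤ |r₁| * |r₂| * v ^ 2 := by
        nlinarith [one_sub_sq_div_two_le_cos (x := v), mul_nonneg (abs_nonneg r₁) (abs_nonneg r₂)]
    _ ≤ K ^ 2 * (|r₁| * |r₂| * (log |r₁| - log |r₂|) ^ 2) := by
        nlinarith [mul_le_mul_of_nonneg_left hv (mul_nonneg (abs_nonneg r₁) (abs_nonneg r₂))]
    _ ≤ K ^ 2 * (r₁ - r₂) ^ 2 := by gcongr; exact hlog.trans habs

lemma abs_clamp_sub_clamp_le (L x y : ℝ) :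
    |max (min x L) 0 - max (min y L) 0| ≤ |x - y| :=
  (abs_max_sub_max_le_abs _ _ _).trans (by simpa using abs_min_sub_min_le_max x L y L)

noncomputable def spiralAngle (ε t : ℝ) : ℝ :=
  π * max (min (log (1 / |t|)) (log (1 / ε))) 0 / log (1 / ε)

lemma spiral_eq_polar {ε : ℝ} (hε0 : 0 < ε) (hε1 : ε < 1) (t : ℝ) :
    spiral ε t = polar t (spiralAngle ε t) := by
  have hL : 0 < log (1 / ε) := log_pos (one_lt_one_div hε0 hε1)
  unfold spiral spiralAngle
  split_ifs with h1 h2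
  · have : log (1 / |t|) ≤ 0 := by rw [one_div, log_inv]; linarith [log_nonneg h1]
    rw [min_eq_left (this.trans hL.le), max_eq_right this]
    simp [polar]
  · rcases eq_or_ne t 0 with rfl | ht
    · simp [polar, pt]
    have : log (1 / ε) ≤ log (1 / |t|) :=
      log_le_log (by positivity) (one_div_le_one_div_of_le (abs_pos.2 ht) h2)
    rw [min_eq_right this, max_eq_left hL.le, mul_div_assoc, div_self hL.ne', mul_one]
    simp [polar]
  · push Not at h1 h2
    have hpos : 0 < log (1 / |t|) := log_pos (by rw [lt_div_iff₀ (hε0.trans h2)]; linarith)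
    have hle : log (1 / |t|) ≤ log (1 / ε) :=
      log_le_log (one_div_pos.2 (hε0.trans h2)) (one_div_le_one_div_of_le hε0 h2.le)
    rw [min_eq_left hle, max_eq_left hpos.le]
    rfl

lemma abs_spiralAngle_sub_le {ε : ℝ} (hε0 : 0 < ε) (hε1 : ε < 1) (t₁ t₂ : ℝ) :
    |spiralAngle ε t₁ - spiralAngle ε t₂| ≤ π / log (1 / ε) * |log (|t₁|) - log (|t₂|)| := by
  have hL : 0 < log (1 / ε) := log_pos (one_lt_one_div hε0 hε1)
  have hc : |max (min (log (1 / |t₁|)) (log (1 / ε))) 0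
      - max (min (log (1 / |t₂|)) (log (1 / ε))) 0| ≤ |log (|t₁|) - log (|t₂|)| :=
    (abs_clamp_sub_clamp_le _ _ _).trans_eq <| by
      rw [one_div, one_div, log_inv, log_inv, neg_sub_neg, abs_sub_comm]
  rw [spiralAngle, spiralAngle, ← sub_div, ← mul_sub, abs_div, abs_mul, abs_of_pos pi_pos,
    abs_of_pos hL, div_mul_eq_mul_div]
  gcongr

lemma spiral_distortion {ε : ℝ} (hε0 : 0 < ε) (hε1 : ε < 1) (t₁ t₂ : ℝ) :
    (1 - π ^ 2 / log (1 / ε) ^ 2) * |t₁ - t₂| ≤ ‖spiral ε t₁ - spiral ε t₂‖ ∧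
      ‖spiral ε t₁ - spiral ε t₂‖ ≤ (1 + π ^ 2 / log (1 / ε) ^ 2) * |t₁ - t₂| := by
  rw [spiral_eq_polar hε0 hε1, spiral_eq_polar hε0 hε1]
  refine le_and_le_of_abs_sq_sub_sq_le (norm_nonneg _) (abs_nonneg _) (by positivity) ?_
  rw [sq_abs, ← div_pow]
  exact abs_norm_polar_sub_polar_sq_sub_sq_le (abs_spiralAngle_sub_le hε0 hε1 t₁ t₂)

lemma norm_spiral_sub_pt_le_two {ε : ℝ} (hε0 : 0 < ε) (hε1 : ε < 1) (t : ℝ) :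
    ‖spiral ε t - pt t 0‖ ≤ 2 := by
  by_cases ht : 1 ≤ |t|
  · simp [spiral, ht]
  have hpt : pt t 0 = polar t 0 := by simp [polar]
  calc ‖spiral ε t - pt t 0‖ ≤ ‖spiral ε t‖ + ‖pt t 0‖ := norm_sub_le _ _
    _ = 2 * |t| := by rw [spiral_eq_polar hε0 hε1, hpt, norm_polar, norm_polar, two_mul]
    _ ≤ 2 := by linarith

/-- **The spiral map is a near isometry with bounded movement.** There are `C > 0` and
`ε₀ ∈ (0,1)` such that for every `ε ∈ (0, ε₀)` the spiral map `g_ε` satisfies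
`(1 - C/ln²(1/ε))|t₁ - t₂| ≤ ‖g_ε t₁ - g_ε t₂‖ ≤ (1 + C/ln²(1/ε))|t₁ - t₂|` for all
`t₁, t₂ ∈ ℝ`, and `‖g_ε t - (t, 0)‖ ≤ C` for all `t ∈ ℝ`. -/
theorem spiral_distortion_and_movement :
    ∃ C > (0 : ℝ), ∃ ε₀ : ℝ, 0 < ε₀ ∧ ε₀ < 1 ∧ ∀ ε : ℝ, 0 < ε → ε < ε₀ →
      (∀ t₁ t₂ : ℝ,
        (1 - C / (Real.log (1 / ε)) ^ 2) * |t₁ - t₂| ≤ ‖spiral ε t₁ - spiral ε t₂‖ ∧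
        ‖spiral ε t₁ - spiral ε t₂‖ ≤ (1 + C / (Real.log (1 / ε)) ^ 2) * |t₁ - t₂|) ∧
      (∀ t : ℝ, ‖spiral ε t - pt t 0‖ ≤ C) := by
  refine ⟨π ^ 2, by positivity, 1 / 2, by norm_num, by norm_num, fun ε hε0 hε ↦
    ⟨spiral_distortion hε0 (by linarith), fun t ↦ ?_⟩⟩
  exact (norm_spiral_sub_pt_le_two hε0 (by linarith) t).trans (by nlinarith [pi_gt_three])
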